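/- arXiv:2104.06150 — 3 statements merged into one kernel-verified Lean document; each statement's English description precedes it below -/
import Mathlib

section
/- Let A be a positive bounded operator on a Hilbert space H and let 0 < p ≤ 1. Then for every x ∈ H with ‖x‖ = 1, one has ⟨A^p x, x⟩ ≤ ⟨A x, x⟩^p, where A^p is defined via the continuous functional calculus applied to t ↦ t^p. -/
open MeasureTheory Complex
open scoped ENNReal NNReal Pointwise

noncomputable section

/-- `ℝ^d` with the Euclidean norm. -/
abbrev Ed (d : ℕ) : Type := EuclideanSpace ℝ (Fin d)

/-- The time-frequency phase space `ℝ^d × ℝ^d ≅ ℝ^{2d}` with the Euclidean norm. -/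
abbrev Phase (d : ℕ) : Type := EuclideanSpace ℝ (Fin d ⊕ Fin d)

/-- `L²(ℝ^d)`. -/
abbrev L2 (d : ℕ) : Type := Lp ℂ 2 (volume : Measure (Ed d))

/-- `L²(ℝ^{2d})`, the `L²` space over phase space. -/
abbrev L2P (d : ℕ) : Type := Lp ℂ 2 (volume : Measure (Phase d))

variable {d : ℕ}

/-- Time component `x` of a phase-space point `z = (x, ξ)`. -/
def phaseX (z : Phase d) : Ed d := (WithLp.equiv 2 _).symm fun i => z (Sum.inl i)

/-- Frequency component `ξ` of a phase-space point `z = (x, ξ)`. -/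
def phaseXi (z : Phase d) : Ed d := (WithLp.equiv 2 _).symm fun i => z (Sum.inr i)

/-- Short-time Fourier transform
`V_g f (x,ξ) = ∫ f(t) conj (g (t - x)) e^{-2πi ξ·t} dt`. -/
def STFT (g f : Ed d → ℂ) (z : Phase d) : ℂ :=
  ∫ t : Ed d, f t * (starRingEnd ℂ) (g (t - phaseX z)) *
    Complex.exp (-(2 * (Real.pi : ℂ) * Complex.I * ((inner ℝ (phaseXi z) t : ℝ) : ℂ)))

/-- `L` is the time-frequency concentration operator with window `g` and domain `Ω`:
`L f (t) = ∫_Ω V_g f (x,ξ) g(t-x) e^{2πi ξ·t} dx dξ`. -/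
def IsConcOp (g : L2 d) (Ω : Set (Phase d)) (L : L2 d →L[ℂ] L2 d) : Prop :=
  ∀ f : L2 d, ⇑(L f) =ᵐ[volume] fun t =>
    ∫ z in Ω, STFT (⇑g) (⇑f) z * g (t - phaseX z) *
      Complex.exp (2 * (Real.pi : ℂ) * Complex.I * ((inner ℝ (phaseXi z) t : ℝ) : ℂ))

/-- `#{λ ∈ σ(T) : λ > δ}`: number of eigenvalues exceeding `δ`, counted with
multiplicities (the sum of the dimensions of the corresponding eigenspaces). -/
def eigCount (T : L2 d →L[ℂ] L2 d) (δ : ℝ) : ℝ :=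
  ∑' μ : ℝ, if δ < μ then
    (Module.finrank ℂ ↥(Module.End.eigenspace (↑T : L2 d →ₗ[ℂ] L2 d) (μ : ℂ)) : ℝ) else 0

/-- `Ω` has regular boundary at scale `η`: there is `κ > 0` with
`H^{2d-1}(∂Ω ∩ B_r(z)) ≥ κ r^{2d-1}` for all `0 < r ≤ η` and `z ∈ ∂Ω`. -/
def HasRegularBoundary (Ω : Set (Phase d)) (η : ℝ) : Prop :=
  ∃ κ : ℝ, 0 < κ ∧ ∀ r : ℝ, 0 < r → r ≤ η → ∀ z ∈ frontier Ω,
    ENNReal.ofReal (κ * r ^ (2 * (d : ℝ) - 1)) ≤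
      μH[2 * (d : ℝ) - 1] (frontier Ω ∩ Metric.closedBall z r)

/-- `κ_{∂Ω,η}`: the largest constant `κ` witnessing the boundary regularity of `Ω`
at scale `η`. -/
def kappa (Ω : Set (Phase d)) (η : ℝ) : ℝ :=
  sSup {κ : ℝ | ∀ r : ℝ, 0 < r → r ≤ η → ∀ z ∈ frontier Ω,
    ENNReal.ofReal (κ * r ^ (2 * (d : ℝ) - 1)) ≤
      μH[2 * (d : ℝ) - 1] (frontier Ω ∩ Metric.closedBall z r)}

/-- Gelfand–Shilov-type condition with parameter `β` and constants `Cg`, `A`: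
`|V_g g(z)| ≤ Cg A^n n!^β (1+|z|)^{-n}` for all `n ∈ ℕ` and `z`. -/
def GelfandShilov (g : L2 d) (β Cg A : ℝ) : Prop :=
  ∀ (n : ℕ) (z : Phase d),
    ‖STFT (⇑g) (⇑g) z‖ ≤ Cg * A ^ n * (n.factorial : ℝ) ^ β / (1 + ‖z‖) ^ n

/-- The decreasing rearrangement of the eigenvalues of `T` (with multiplicities):
`λ_k = inf {‖T - S‖ : S bounded, dim (range S) < k}`. -/
def eigSeq (T : L2 d →L[ℂ] L2 d) (k : ℕ) : ℝ :=
  sInf {r : ℝ | ∃ S : L2 d →L[ℂ] L2 d,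
    Module.rank ℂ ↥(LinearMap.range (↑S : L2 d →ₗ[ℂ] L2 d)) < (k : Cardinal) ∧ r = ‖T - S‖}

/-- The trace of a positive operator `A` on a Hilbert space, as the supremum over all
finite orthonormal families of the sums `∑ ⟨A x, x⟩` (for positive `A` this agrees with
`∑ ⟨A e_n, e_n⟩` over any orthonormal basis `(e_n)`). -/
def ptrace {H : Type*} [NormedAddCommGroup H] [InnerProductSpace ℂ H] [CompleteSpace H]
    (A : H →L[ℂ] H) : ℝ≥0∞ :=
  ⨆ (s : Finset H) (_ : Orthonormal ℂ (fun x : (s : Set H) => (x : H))),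
    ∑ x ∈ s, ENNReal.ofReal (inner ℂ (A x) x : ℂ).re

/-- Schatten quasi-norm `‖T‖_p^p = trace ((T* T)^{p/2})`, the power taken via the
continuous functional calculus. -/
def schattenPow {H : Type*} [NormedAddCommGroup H] [InnerProductSpace ℂ H] [CompleteSpace H]
    (T : H →L[ℂ] H) (p : ℝ) : ℝ≥0∞ :=
  ptrace (cfc (fun t : ℝ => t ^ (p / 2)) ((ContinuousLinearMap.adjoint T).comp T))

/-- `V` is the short-time Fourier transform with window `g`, as an operator
`L²(ℝ^d) → L²(ℝ^{2d})`. -/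
def IsSTFTOp (g : L2 d) (V : L2 d →L[ℂ] L2P d) : Prop :=
  ∀ f : L2 d, ⇑(V f) =ᵐ[volume] STFT (⇑g) (⇑f)

/-- `M` is the operator of multiplication by the indicator function `1_Ω` on `L²(ℝ^{2d})`. -/
def IsIndicatorOp (Ω : Set (Phase d)) (M : L2P d →L[ℂ] L2P d) : Prop :=
  ∀ F : L2P d, ⇑(M F) =ᵐ[volume] Ω.indicator ⇑F

/-- The projection `P = V_g V_g*` onto the range of the short-time Fourier transform. -/
def gaborProj (V : L2 d →L[ℂ] L2P d) : L2P d →L[ℂ] L2P d :=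
  V ∘L ContinuousLinearMap.adjoint V

/-- The Gabor–Toeplitz operator `T_Ω F = P (1_Ω · P F)`. -/
def gaborToeplitz (V : L2 d →L[ℂ] L2P d) (M : L2P d →L[ℂ] L2P d) : L2P d →L[ℂ] L2P d :=
  gaborProj V ∘L (M ∘L gaborProj V)

/-- The Gabor–Hankel operator `H_Ω F = 1_Ω · P F - P (1_Ω · P F)`. -/
def gaborHankel (V : L2 d →L[ℂ] L2P d) (M : L2P d →L[ℂ] L2P d) : L2P d →L[ℂ] L2P d :=
  M ∘L gaborProj V - gaborToeplitz V M

/-- Lower incomplete gamma function `γ(s,x) = ∫₀ˣ t^{s-1} e^{-t} dt`. -/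
def lowerGamma (s x : ℝ) : ℝ := ∫ t in Set.Ioc (0 : ℝ) x, t ^ (s - 1) * Real.exp (-t)

end

section Aux


variable {H : Type*} [NormedAddCommGroup H] [InnerProductSpace ℂ H] [CompleteSpace H]

lemma rpow_le_tangent {p : ℝ} (hp0 : 0 < p) (hp1 : p ≤ 1) {t ε : ℝ} (ht : 0 ≤ t) (hε : 0 < ε) :
    t ^ p ≤ ε ^ p + p * ε ^ (p - 1) * (t - ε) := by
  have hs : -1 ≤ t / ε - 1 := by
    have := div_nonneg ht hε.le; linarith
  have hber := rpow_one_add_le_one_add_mul_self hs hp0.le hp1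
  rw [add_sub_cancel] at hber
  have h2 : t ^ p = ε ^ p * (t / ε) ^ p := by
    rw [← Real.mul_rpow hε.le (div_nonneg ht hε.le), mul_div_cancel₀ _ hε.ne']
  calc t ^ p = ε ^ p * (t / ε) ^ p := h2
    _ ≤ ε ^ p * (1 + p * (t / ε - 1)) :=
        mul_le_mul_of_nonneg_left hber (Real.rpow_nonneg hε.le _)
    _ = ε ^ p + p * ε ^ (p - 1) * (t - ε) := by
        have : ε ^ (p - 1) = ε ^ p / ε := by
          rw [Real.rpow_sub hε, Real.rpow_one]
        rw [this]
        field_simp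

lemma inner_le_of_ople {S T : H →L[ℂ] H} (h : S ≤ T) (x : H) :
    (inner ℂ (S x) x : ℂ).re ≤ (inner ℂ (T x) x : ℂ).re := by
  have := ((ContinuousLinearMap.nonneg_iff_isPositive (T - S)).mp (sub_nonneg.mpr h)).2 x
  simp only [ContinuousLinearMap.reApplyInnerSelf_apply, ContinuousLinearMap.sub_apply,
    inner_sub_left, map_sub, RCLike.re_to_complex] at this
  linarith

end Aux

/-- **Lemma 2.2: for a positive operator `A` and `0 < p ≤ 1`,
`⟨A^p x, x⟩ ≤ ⟨A x, x⟩^p` for unit vectors `x`.** -/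
theorem positive_operator_power_inner_le {H : Type*} [NormedAddCommGroup H]
    [InnerProductSpace ℂ H] [CompleteSpace H]
    (A : H →L[ℂ] H) (hA : A.IsPositive) (p : ℝ) (hp0 : 0 < p) (hp1 : p ≤ 1)
    (x : H) (hx : ‖x‖ = 1) :
    (inner ℂ ((cfc (fun t : ℝ => t ^ p) A) x) x : ℂ).re ≤
      ((inner ℂ (A x) x : ℂ).re) ^ p := by
  set lam : ℝ := (inner ℂ (A x) x : ℂ).re with hlam
  have hAnn : (0 : H →L[ℂ] H) ≤ A := (ContinuousLinearMap.nonneg_iff_isPositive A).mpr hA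
  have hlam0 : 0 ≤ lam := by
    have := hA.2 x
    rwa [ContinuousLinearMap.reApplyInnerSelf_apply, RCLike.re_to_complex] at this
  have key : ∀ ε : ℝ, 0 < ε →
      (inner ℂ ((cfc (fun t : ℝ => t ^ p) A) x) x : ℂ).re ≤
        ε ^ p + p * ε ^ (p - 1) * (lam - ε) := by
    intro ε hε
    have hmono : cfc (fun t : ℝ => t ^ p) A ≤
        cfc (fun t : ℝ => ε ^ p + p * ε ^ (p - 1) * (t - ε)) A := by
      apply cfc_mono
      · intro t ht
        exact rpow_le_tangent hp0 hp1 (spectrum_nonneg_of_nonneg hAnn ht) hε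
      · exact fun t ht => (Real.continuousAt_rpow_const t p (Or.inr hp0.le)).continuousWithinAt
      · exact ((continuous_const.add ((continuous_const.mul
          (continuous_id.sub continuous_const)))).continuousOn)
    have hcfc : cfc (fun t : ℝ => ε ^ p + p * ε ^ (p - 1) * (t - ε)) A =
        algebraMap ℝ (H →L[ℂ] H) (ε ^ p - p * ε ^ (p - 1) * ε) + (p * ε ^ (p - 1)) • A := by
      have h1 : (fun t : ℝ => ε ^ p + p * ε ^ (p - 1) * (t - ε)) =
          fun t : ℝ => (ε ^ p - p * ε ^ (p - 1) * ε) + (p * ε ^ (p - 1)) * t := by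
        funext t; ring
      rw [h1, cfc_add (R := ℝ) (a := A) _ _ (by fun_prop) (by fun_prop),
        cfc_const _ A hA.isSelfAdjoint, cfc_const_mul _ _ A, cfc_id' ℝ A hA.isSelfAdjoint]
    have := inner_le_of_ople hmono x
    rw [hcfc] at this
    refine this.trans_eq ?_
    have hinner : (inner ℂ ((algebraMap ℝ (H →L[ℂ] H) (ε ^ p - p * ε ^ (p - 1) * ε) +
        (p * ε ^ (p - 1)) • A) x) x : ℂ).re =
        (ε ^ p - p * ε ^ (p - 1) * ε) + (p * ε ^ (p - 1)) * lam := by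
      have hid : (algebraMap ℝ (H →L[ℂ] H) (ε ^ p - p * ε ^ (p - 1) * ε)) x
          = (ε ^ p - p * ε ^ (p - 1) * ε) • x := by
        simp [Algebra.algebraMap_eq_smul_one]
      have hxx : (inner ℂ x x : ℂ) = 1 := by
        rw [inner_self_eq_norm_sq_to_K, hx]; norm_num
      rw [ContinuousLinearMap.add_apply, inner_add_left, ContinuousLinearMap.smul_apply, hid,
        RCLike.real_smul_eq_coe_smul (K := ℂ), RCLike.real_smul_eq_coe_smul (K := ℂ),
        inner_smul_left, inner_smul_left, hxx]
      simp [hlam]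
    rw [hinner]; ring
  rcases eq_or_lt_of_le hlam0 with h0 | hpos
  · have hle : ∀ ε : ℝ, 0 < ε →
        (inner ℂ ((cfc (fun t : ℝ => t ^ p) A) x) x : ℂ).re ≤ (1 - p) * ε ^ p := by
      intro ε hε
      have := key ε hε
      have heq : ε ^ p + p * ε ^ (p - 1) * (lam - ε) = (1 - p) * ε ^ p := by
        rw [← h0]
        have : ε ^ (p - 1) * ε = ε ^ p := by
          rw [← Real.rpow_add_one hε.ne' (p-1)]; ring_nf
        nlinarith [this]
      linarith [heq ▸ this]
    have htend : Filter.Tendsto (fun ε : ℝ => (1 - p) * ε ^ p)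
        (nhdsWithin 0 (Set.Ioi 0)) (nhds 0) := by
      have : Filter.Tendsto (fun ε : ℝ => ε ^ p) (nhdsWithin 0 (Set.Ioi 0)) (nhds 0) := by
        have := (Real.continuousAt_rpow_const 0 p (Or.inr hp0.le)).continuousWithinAt
          (s := Set.Ioi (0:ℝ))
        simpa [Real.zero_rpow hp0.ne', ContinuousWithinAt] using this
      simpa using this.const_mul (1 - p)
    have hfin : (inner ℂ ((cfc (fun t : ℝ => t ^ p) A) x) x : ℂ).re ≤ 0 := by
      refine ge_of_tendsto htend ?_
      exact eventually_mem_nhdsWithin.mono fun ε hε => hle ε hε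
    rw [← h0, Real.zero_rpow hp0.ne']
    exact hfin
  · have := key lam hpos
    simpa using this
end

section
/- Let Ω ⊆ ℝ^{2d} be a compact set, let E = Ω or E = Ω^C (the complement of Ω), and let φ ∈ L¹(ℝ^{2d}). Then ‖1_E * φ − (∫_{ℝ^{2d}} φ) · 1_E‖_{L¹(ℝ^{2d})} ≤ H^{2d−1}(∂Ω) · ∫_{ℝ^{2d}} |z| |φ(z)| dz, where * denotes convolution, 1_E is the indicator function of E, and H^{2d−1} is the (2d−1)-dimensional Hausdorff measure of the topological boundary ∂Ω. -/
open MeasureTheory Complex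
open scoped ENNReal NNReal Pointwise

section AuxRegularization

open MeasureTheory Set
open scoped ENNReal NNReal Pointwise RealInnerProductSpace

lemma aux_preconnected_frontier {X : Type*} [TopologicalSpace X] {s t : Set X}
    (hs : IsPreconnected s) (h1 : (s ∩ t).Nonempty) (h2 : (s \ t).Nonempty) :
    (s ∩ frontier t).Nonempty := by
  by_contra h
  rw [Set.not_nonempty_iff_eq_empty] at h
  have hmem : ∀ x ∈ s, x ∉ frontier t := fun x hx hf =>
    (Set.eq_empty_iff_forall_notMem.1 h x) ⟨hx, hf⟩
  have key := hs (interior t) (closure t)ᶜ isOpen_interior isClosed_closure.isOpen_compl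
    (fun x hxs => by
      by_cases hxc : x ∈ closure t
      · left
        by_contra hxi
        exact hmem x hxs ⟨hxc, hxi⟩
      · exact Or.inr hxc)
    (by
      obtain ⟨x, hxs, hxt⟩ := h1
      refine ⟨x, hxs, ?_⟩
      by_contra hxi
      exact hmem x hxs ⟨subset_closure hxt, hxi⟩)
    (by
      obtain ⟨x, hxs, hxt⟩ := h2
      exact ⟨x, hxs, fun hxc => hmem x hxs ⟨hxc, fun hxi => hxt (interior_subset hxi)⟩⟩)
  obtain ⟨x, -, hx1, hx2⟩ := key
  exact hx2 (interior_subset_closure hx1)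

lemma aux_ennreal_le {x y z : ℝ≥0∞} (hz : z ≠ ∞)
    (h : ∀ ε : ℝ≥0∞, 0 < ε → ε ≠ ∞ → x ≤ y + ε * z) : x ≤ y := by
  rcases eq_or_ne z 0 with rfl | hz0
  · simpa using h 1 one_pos ENNReal.one_ne_top
  · refine ENNReal.le_of_forall_pos_le_add fun η hη _ => ?_
    have hη0 : (η : ℝ≥0∞) ≠ 0 := by exact_mod_cast hη.ne'
    have h1 : ((η : ℝ≥0∞) / z) ≠ 0 := by
      simp [ENNReal.div_eq_top, ENNReal.div_ne_zero, hη0, hz]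
    have h2 : ((η : ℝ≥0∞) / z) ≠ ∞ := by
      simp [ENNReal.div_eq_top, hη0, hz0, ENNReal.coe_ne_top]
    calc x ≤ y + ((η : ℝ≥0∞) / z) * z := h _ (pos_iff_ne_zero.2 h1) h2
    _ = y + η := by rw [ENNReal.div_mul_cancel hz0 hz]

lemma aux_box {d : ℕ} {ι : Type*} [Fintype ι] (b : OrthonormalBasis ι ℝ (Phase d))
    (A : Set (Phase d)) (L : ι → ℝ)
    (h : ∀ x ∈ A, ∀ y ∈ A, ∀ i, |⟪b i, x - y⟫| ≤ L i) :
    volume A ≤ ∏ i, ENNReal.ofReal (L i) := by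
  rcases A.eq_empty_or_nonempty with rfl | ⟨x₀, hx₀⟩
  · simp
  have hbdd : ∀ i, BddBelow ((fun x => ⟪b i, x⟫) '' A) := by
    intro i
    refine ⟨⟪b i, x₀⟫ - L i, ?_⟩
    rintro r ⟨y, hy, rfl⟩
    have h' := h x₀ hx₀ y hy i
    rw [inner_sub_right] at h'
    have := (abs_le.1 h').2
    linarith
  set a : ι → ℝ := fun i => sInf ((fun x => ⟪b i, x⟫) '' A) with ha
  have hmem : ∀ x ∈ A, ∀ i, ⟪b i, x⟫ ∈ Set.Icc (a i) (a i + L i) := by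
    intro x hx i
    constructor
    · exact csInf_le (hbdd i) ⟨x, hx, rfl⟩
    · have hlb : ⟪b i, x⟫ - L i ≤ a i := by
        refine le_csInf ⟨_, ⟨x₀, hx₀, rfl⟩⟩ ?_
        rintro r ⟨y, hy, rfl⟩
        have h' := h x hx y hy i
        rw [inner_sub_right] at h'
        have := (abs_le.1 h').2
        linarith
      linarith
  have hΦ : MeasurePreserving (fun x : Phase d => fun i => ⟪b i, x⟫) volume volume := by
    have h2 := (EuclideanSpace.volume_preserving_symm_measurableEquiv_toLp ι).comp
      b.measurePreserving_repr
    convert h2 using 1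
    · rfl
    funext x
    funext i
    exact (b.repr_apply_apply x i).symm
  calc volume A
      ≤ volume ((fun x : Phase d => fun i => ⟪b i, x⟫) ⁻¹'
          Set.pi Set.univ fun i => Set.Icc (a i) (a i + L i)) :=
        measure_mono (fun x hx i _ => hmem x hx i)
    _ = volume (Set.pi Set.univ fun i => Set.Icc (a i) (a i + L i)) :=
        hΦ.measure_preimage
          ((MeasurableSet.univ_pi fun i => measurableSet_Icc).nullMeasurableSet)
    _ = ∏ i, ENNReal.ofReal (L i) := by
        rw [volume_pi_pi]
        simp [Real.volume_Icc]

lemma aux_tube {d : ℕ} (hd : 0 < d) (F : Set (Phase d)) (w : Phase d) (hw : w ≠ 0) :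
    volume (F + (fun t : ℝ => t • w) '' Set.Icc (0:ℝ) 1) ≤
      μH[2 * (d : ℝ) - 1] F * (‖w‖₊ : ℝ≥0∞) := by
  classical
  set seg : Set (Phase d) := (fun t : ℝ => t • w) '' Set.Icc (0:ℝ) 1 with hseg
  set i₀ : Fin d ⊕ Fin d := Sum.inl ⟨0, hd⟩ with hi₀
  set u : Phase d := ‖w‖⁻¹ • w with hu
  have hu1 : ‖u‖ = 1 := norm_smul_inv_norm hw
  have hv : Orthonormal ℝ (Set.restrict {i₀} (fun _ : Fin d ⊕ Fin d => u)) := by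
    rw [orthonormal_iff_ite]
    intro i j
    rw [if_pos (Subsingleton.elim i j)]
    show ⟪u, u⟫ = 1
    rw [real_inner_self_eq_norm_mul_norm, hu1]
    norm_num
  obtain ⟨b, hb⟩ := hv.exists_orthonormalBasis_extension_of_card_eq
      (by simp [finrank_euclideanSpace])
  have hb0 : b i₀ = u := hb i₀ rfl
  have hwu : w = ‖w‖ • b i₀ := by
    rw [hb0, hu, smul_inv_smul₀ (norm_ne_zero_iff.2 hw)]
  have hinner0 : ∀ i, i ≠ i₀ → ⟪b i, w⟫ = 0 := by
    intro i hi
    rw [hwu, real_inner_smul_right, b.orthonormal.2 hi, mul_zero]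
  have hinner1 : ⟪b i₀, w⟫ = ‖w‖ := by
    rw [hb0, hu, real_inner_smul_left, real_inner_self_eq_norm_mul_norm]
    have : ‖w‖ ≠ 0 := norm_ne_zero_iff.2 hw
    field_simp
  set s : ℝ := 2 * (d : ℝ) - 1 with hs
  set c : ℝ≥0∞ := (‖w‖₊ : ℝ≥0∞) with hc
  have hc0 : c ≠ 0 := by
    simp [hc, ENNReal.coe_eq_zero, nnnorm_eq_zero, hw]
  have hcw : ENNReal.ofReal ‖w‖ = c := ofReal_norm w
  have claim : ∀ δ : ℝ, 0 < δ →
      volume (F + seg) ≤ μH[s] F * (ENNReal.ofReal δ + c) := by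
    intro δ hδ
    set r : ℝ≥0∞ := ENNReal.ofReal δ with hr
    have hr0 : 0 < r := ENNReal.ofReal_pos.2 hδ
    set m : ℝ≥0∞ := ⨅ (t : ℕ → Set (Phase d)) (_ : F ⊆ ⋃ n, t n)
        (_ : ∀ n, EMetric.diam (t n) ≤ r),
        ∑' n, ⨆ _ : (t n).Nonempty, EMetric.diam (t n) ^ s with hm
    have hmH : m ≤ μH[s] F := by
      rw [MeasureTheory.Measure.hausdorffMeasure_apply]
      exact le_iSup₂ (f := fun (r : ℝ≥0∞) (_ : 0 < r) =>
        ⨅ (t : ℕ → Set (Phase d)) (_ : F ⊆ ⋃ n, t n)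
          (_ : ∀ n, EMetric.diam (t n) ≤ r),
          ∑' n, ⨆ _ : (t n).Nonempty, EMetric.diam (t n) ^ s) r hr0
    have hvol : ∀ (t : ℕ → Set (Phase d)), F ⊆ ⋃ n, t n →
        (∀ n, EMetric.diam (t n) ≤ r) →
        volume (F + seg) ≤
          (r + c) * ∑' n, ⨆ _ : (t n).Nonempty, EMetric.diam (t n) ^ s := by
      intro t hcov hdiam
      have hsub : F + seg ⊆ ⋃ n, (t n ∩ F) + seg := by
        rintro x hx
        rw [Set.mem_add] at hx
        obtain ⟨y, hy, z, hz, rfl⟩ := hx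
        obtain ⟨n, hn⟩ := Set.mem_iUnion.1 (hcov hy)
        exact Set.mem_iUnion.2 ⟨n, Set.add_mem_add ⟨hn, hy⟩ hz⟩
      refine le_trans (measure_mono hsub) (le_trans (measure_iUnion_le _) ?_)
      rw [← ENNReal.tsum_mul_left]
      refine ENNReal.tsum_le_tsum fun n => ?_
      rcases (t n ∩ F).eq_empty_or_nonempty with he | ⟨y₀, hy₀⟩
      · simp [he, Set.empty_add]
      · have htn : (t n).Nonempty := ⟨y₀, hy₀.1⟩
        rw [iSup_pos htn]
        have hDtop : EMetric.diam (t n) ≠ ∞ :=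
          (lt_of_le_of_lt (hdiam n) ENNReal.ofReal_lt_top).ne
        set D : ℝ := (EMetric.diam (t n)).toReal with hD
        have hD0 : 0 ≤ D := ENNReal.toReal_nonneg
        have hdist : ∀ x ∈ t n, ∀ y ∈ t n, dist x y ≤ D := by
          intro x hx y hy
          rw [dist_edist]
          exact ENNReal.toReal_mono hDtop (EMetric.edist_le_diam_of_mem hx hy)
        have hboxbound : ∀ x ∈ (t n ∩ F) + seg, ∀ y ∈ (t n ∩ F) + seg, ∀ i,
            |⟪b i, x - y⟫| ≤ (if i = i₀ then D + ‖w‖ else D) := by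
          rintro x hx y hy i
          rw [Set.mem_add] at hx hy
          obtain ⟨y1, hy1, z1, ⟨t1, ht1, rfl⟩, rfl⟩ := hx
          obtain ⟨y2, hy2, z2, ⟨t2, ht2, rfl⟩, rfl⟩ := hy
          have hexp : (y1 + t1 • w) - (y2 + t2 • w) = (y1 - y2) + (t1 - t2) • w := by
            rw [sub_smul]; abel
          rw [hexp, inner_add_right, real_inner_smul_right]
          have h1 : |⟪b i, y1 - y2⟫| ≤ D := by
            refine le_trans (abs_real_inner_le_norm _ _) ?_
            rw [b.orthonormal.1 i, one_mul, ← dist_eq_norm]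
            exact hdist _ hy1.1 _ hy2.1
          by_cases hii : i = i₀
          · rw [if_pos hii]
            subst hii
            rw [hinner1]
            have h2 : |t1 - t2| ≤ 1 := by
              rw [abs_le]
              constructor
              · linarith [ht1.1, ht2.2]
              · linarith [ht1.2, ht2.1]
            have h3 : |(t1 - t2) * ‖w‖| ≤ ‖w‖ := by
              rw [abs_mul, _root_.abs_of_nonneg (norm_nonneg w)]
              calc |t1 - t2| * ‖w‖ ≤ 1 * ‖w‖ :=
                mul_le_mul_of_nonneg_right h2 (norm_nonneg w)
              _ = ‖w‖ := one_mul _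
            calc |⟪b i₀, y1 - y2⟫ + (t1 - t2) * ‖w‖|
                ≤ |⟪b i₀, y1 - y2⟫| + |(t1 - t2) * ‖w‖| := abs_add_le _ _
            _ ≤ D + ‖w‖ := add_le_add h1 h3
          · rw [if_neg hii, hinner0 i hii, mul_zero, add_zero]
            exact h1
        refine le_trans (aux_box b _ _ hboxbound) ?_
        rw [← Finset.mul_prod_erase Finset.univ _ (Finset.mem_univ i₀)]
        have hprod : (∏ i ∈ Finset.univ.erase i₀,
            ENNReal.ofReal (if i = i₀ then D + ‖w‖ else D)) =
            ENNReal.ofReal D ^ (d + d - 1) := by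
          rw [Finset.prod_congr rfl
            (fun i hi => by rw [if_neg (Finset.ne_of_mem_erase hi)])]
          rw [Finset.prod_const, Finset.card_erase_of_mem (Finset.mem_univ i₀)]
          congr 1
          simp [Finset.card_univ]
        rw [hprod, if_pos rfl]
        have hofD : ENNReal.ofReal D = EMetric.diam (t n) := ENNReal.ofReal_toReal hDtop
        rw [ENNReal.ofReal_add hD0 (norm_nonneg w), hofD, hcw]
        have hpow : EMetric.diam (t n) ^ (d + d - 1) = EMetric.diam (t n) ^ s := by
          rw [hs, ← ENNReal.rpow_natCast]
          congr 1
          have h1 : (1:ℕ) ≤ d + d := by omega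
          rw [Nat.cast_sub h1]
          push_cast
          ring
        rw [hpow]
        exact mul_le_mul_left (add_le_add (hdiam n) le_rfl) _
    have hk0 : (r + c) ≠ 0 := by simp [hc0]
    have hktop : (r + c) ≠ ∞ := by
      simp [hr, hc, ENNReal.add_eq_top, ENNReal.ofReal_ne_top, ENNReal.coe_ne_top]
    have hdiv : volume (F + seg) / (r + c) ≤ m := by
      refine le_iInf fun t => le_iInf fun h1 => le_iInf fun h2 => ?_
      rw [ENNReal.div_le_iff_le_mul (Or.inl hk0) (Or.inl hktop), mul_comm]
      exact hvol t h1 h2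
    have hfin := (ENNReal.div_le_iff_le_mul (Or.inl hk0) (Or.inl hktop)).1 (hdiv.trans hmH)
    exact hfin
  rcases eq_or_ne (μH[s] F) ∞ with hH | hH
  · rw [hH, ENNReal.top_mul hc0]
    exact le_top
  · rw [mul_comm]
    refine aux_ennreal_le hH fun ε hε hεtop => ?_
    have hδ : (0:ℝ) < ε.toReal := ENNReal.toReal_pos hε.ne' hεtop
    have hcl := claim ε.toReal hδ
    rw [ENNReal.ofReal_toReal hεtop] at hcl
    calc volume (F + seg) ≤ μH[s] F * (ε + c) := hcl
    _ = c * μH[s] F + ε * μH[s] F := by ring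

lemma aux_hit {d : ℕ} {Ω : Set (Phase d)} {z w : Phase d}
    (h : ¬ (z - w ∈ Ω ↔ z ∈ Ω)) :
    z ∈ frontier Ω + (fun t : ℝ => t • w) '' Set.Icc (0:ℝ) 1 := by
  set S : Set (Phase d) := (fun t : ℝ => z - t • w) '' Set.Icc (0:ℝ) 1 with hSdef
  have hS : IsPreconnected S :=
    (isPreconnected_Icc).image _ (Continuous.continuousOn (continuous_const.sub (continuous_id.smul continuous_const)))
  have hz0 : z ∈ S := ⟨0, ⟨le_refl 0, zero_le_one⟩, by simp⟩
  have hz1 : z - w ∈ S := ⟨1, ⟨zero_le_one, le_refl 1⟩, by simp⟩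
  have key : (S ∩ frontier Ω).Nonempty := by
    by_cases h1 : z ∈ Ω
    · have h2 : z - w ∉ Ω := fun h2 => h ⟨fun _ => h1, fun _ => h2⟩
      exact aux_preconnected_frontier hS ⟨z, hz0, h1⟩ ⟨z - w, hz1, h2⟩
    · have h2 : z - w ∈ Ω := by
        by_contra h2
        exact h ⟨fun hh => absurd hh h2, fun hh => absurd hh h1⟩
      exact aux_preconnected_frontier hS ⟨z - w, hz1, h2⟩ ⟨z, hz0, h1⟩
  obtain ⟨p, ⟨t, ht, rfl⟩, hp⟩ := key
  exact Set.mem_add.2 ⟨z - t • w, hp, t • w, ⟨t, ht, rfl⟩, sub_add_cancel z (t • w)⟩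

lemma aux_ptwise {d : ℕ} {Ω : Set (Phase d)} (w z : Phase d) :
    (‖Ω.indicator (fun _ => (1:ℝ)) (z - w) - Ω.indicator (fun _ => (1:ℝ)) z‖₊ : ℝ≥0∞) ≤
      (frontier Ω + (fun t : ℝ => t • w) '' Set.Icc (0:ℝ) 1).indicator
        (fun _ => (1 : ℝ≥0∞)) z := by
  by_cases hmem : z - w ∈ Ω ↔ z ∈ Ω
  · have heq : Ω.indicator (fun _ => (1:ℝ)) (z - w) = Ω.indicator (fun _ => (1:ℝ)) z := by
      by_cases h2 : z ∈ Ω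
      · rw [Set.indicator_of_mem (hmem.2 h2), Set.indicator_of_mem h2]
      · rw [Set.indicator_of_notMem (fun hh => h2 (hmem.1 hh)),
          Set.indicator_of_notMem h2]
    rw [heq, sub_self]
    simp
  · rw [Set.indicator_of_mem (aux_hit hmem)]
    by_cases h1 : z - w ∈ Ω <;> by_cases h2 : z ∈ Ω <;>
      simp [Set.indicator_of_mem, Set.indicator_of_notMem, h1, h2]

end AuxRegularization

/-- **Lemma 2.3 (regularization lemma):
`‖1_E * φ - (∫ φ) 1_E‖₁ ≤ H^{2d-1}(∂Ω) ∫ |z| |φ(z)| dz` for `E = Ω` or `Ωᶜ`.** -/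
theorem indicator_convolution_L1_bound (d : ℕ) (Ω : Set (Phase d)) (hΩ : IsCompact Ω)
    (E : Set (Phase d)) (hE : E = Ω ∨ E = Ωᶜ)
    (φ : Phase d → ℝ) (hφ : Integrable φ) :
    (∫⁻ z : Phase d,
        (‖(∫ w : Phase d, E.indicator (fun _ => (1 : ℝ)) (z - w) * φ w) -
            (∫ w : Phase d, φ w) * E.indicator (fun _ => (1 : ℝ)) z‖₊ : ℝ≥0∞)) ≤
      μH[2 * (d : ℝ) - 1] (frontier Ω) *
        ∫⁻ z : Phase d, (‖z‖₊ : ℝ≥0∞) * (‖φ z‖₊ : ℝ≥0∞) := by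
  classical
  rcases Nat.eq_zero_or_pos d with h0 | hd
  · subst h0
    have hsub : Subsingleton (Phase 0) :=
      ⟨fun a b => PiLp.ext fun i => isEmptyElim i⟩
    have hz : ∀ z w : Phase 0, z - w = z := fun z w => Subsingleton.elim _ _
    have hzero : ∀ z : Phase 0,
        (∫ w : Phase 0, E.indicator (fun _ => (1:ℝ)) (z - w) * φ w) -
          (∫ w : Phase 0, φ w) * E.indicator (fun _ => (1:ℝ)) z = 0 := by
      intro z
      simp only [hz]
      rw [integral_const_mul]
      ring
    simp only [hzero]
    simp
  · have hΩm : MeasurableSet Ω := hΩ.measurableSet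
    obtain ⟨ψ, hψm, hψe⟩ : ∃ ψ, StronglyMeasurable ψ ∧ φ =ᵐ[volume] ψ :=
      ⟨hφ.1.mk φ, hφ.1.stronglyMeasurable_mk, hφ.1.ae_eq_mk⟩
    have hψmeas : Measurable ψ := hψm.measurable
    have hψint : Integrable ψ := hφ.congr hψe
    have hLHS : (∫⁻ z : Phase d,
        (‖(∫ w : Phase d, E.indicator (fun _ => (1 : ℝ)) (z - w) * φ w) -
            (∫ w : Phase d, φ w) * E.indicator (fun _ => (1 : ℝ)) z‖₊ : ℝ≥0∞)) =
        ∫⁻ z : Phase d,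
        (‖(∫ w : Phase d, E.indicator (fun _ => (1 : ℝ)) (z - w) * ψ w) -
            (∫ w : Phase d, ψ w) * E.indicator (fun _ => (1 : ℝ)) z‖₊ : ℝ≥0∞) := by
      refine lintegral_congr fun z => ?_
      have e1 : (∫ w : Phase d, E.indicator (fun _ => (1 : ℝ)) (z - w) * φ w) =
          ∫ w : Phase d, E.indicator (fun _ => (1 : ℝ)) (z - w) * ψ w :=
        integral_congr_ae (hψe.mono fun w hw => by dsimp only; rw [hw])
      have e2 : (∫ w : Phase d, φ w) = ∫ w : Phase d, ψ w := integral_congr_ae hψe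
      rw [e1, e2]
    have hRHS : (∫⁻ z : Phase d, (‖z‖₊ : ℝ≥0∞) * (‖φ z‖₊ : ℝ≥0∞)) =
        ∫⁻ z : Phase d, (‖z‖₊ : ℝ≥0∞) * (‖ψ z‖₊ : ℝ≥0∞) :=
      lintegral_congr_ae (hψe.mono fun z hz => by dsimp only; rw [hz])
    rw [hLHS, hRHS]
    -- integrability of indicator * ψ
    have hint : ∀ z : Phase d, Integrable
        (fun w => Ω.indicator (fun _ => (1:ℝ)) (z - w) * ψ w) := by
      intro z
      refine hψint.bdd_mul (c := 1) ?_ (Filter.Eventually.of_forall fun w => ?_)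
      · exact (((measurable_const.indicator hΩm).comp
          (measurable_const.sub measurable_id))).aestronglyMeasurable
      · by_cases h : z - w ∈ Ω <;> simp [h]
    -- reduce E to Ω
    have hEΩ : ∀ z : Phase d,
        (‖(∫ w : Phase d, E.indicator (fun _ => (1 : ℝ)) (z - w) * ψ w) -
            (∫ w : Phase d, ψ w) * E.indicator (fun _ => (1 : ℝ)) z‖₊ : ℝ≥0∞) =
        (‖(∫ w : Phase d, Ω.indicator (fun _ => (1 : ℝ)) (z - w) * ψ w) -
            (∫ w : Phase d, ψ w) * Ω.indicator (fun _ => (1 : ℝ)) z‖₊ : ℝ≥0∞) := by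
      rcases hE with rfl | rfl
      · intro z; rfl
      · intro z
        have hind : ∀ x : Phase d, (Ωᶜ).indicator (fun _ => (1:ℝ)) x =
            1 - Ω.indicator (fun _ => (1:ℝ)) x := by
          intro x; by_cases hx : x ∈ Ω <;> simp [hx]
        have heq1 : (∫ w : Phase d, (Ωᶜ).indicator (fun _ => (1:ℝ)) (z - w) * ψ w) =
            (∫ w : Phase d, ψ w) -
              ∫ w : Phase d, Ω.indicator (fun _ => (1:ℝ)) (z - w) * ψ w := by
          rw [← integral_sub hψint (hint z)]
          refine integral_congr_ae (Filter.Eventually.of_forall fun w => ?_)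
          dsimp only
          rw [hind (z - w)]
          ring
        rw [heq1, hind z]
        congr 1
        rw [← nnnorm_neg]
        congr 1
        ring
    simp only [hEΩ]
    -- tube sets
    set T : Phase d → Set (Phase d) :=
      fun w => frontier Ω + (fun t : ℝ => t • w) '' Set.Icc (0:ℝ) 1 with hT
    have hTmeas : ∀ w, MeasurableSet (T w) := by
      intro w
      have h1 : IsCompact (frontier Ω) :=
        hΩ.of_isClosed_subset isClosed_frontier (hΩ.isClosed.frontier_subset)
      have h2 : IsCompact ((fun t : ℝ => t • w) '' Set.Icc (0:ℝ) 1) :=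
        (isCompact_Icc).image (continuous_id.smul continuous_const)
      exact (h1.add h2).measurableSet
    set H : ℝ≥0∞ := μH[2 * (d : ℝ) - 1] (frontier Ω) with hH
    calc (∫⁻ z : Phase d,
        (‖(∫ w : Phase d, Ω.indicator (fun _ => (1 : ℝ)) (z - w) * ψ w) -
            (∫ w : Phase d, ψ w) * Ω.indicator (fun _ => (1 : ℝ)) z‖₊ : ℝ≥0∞))
        ≤ ∫⁻ z : Phase d, ∫⁻ w : Phase d,
            (‖Ω.indicator (fun _ => (1:ℝ)) (z - w) - Ω.indicator (fun _ => (1:ℝ)) z‖₊ :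
              ℝ≥0∞) * (‖ψ w‖₊ : ℝ≥0∞) := by
          refine lintegral_mono fun z => ?_
          have hconst : Integrable (fun w : Phase d =>
              Ω.indicator (fun _ => (1:ℝ)) z * ψ w) := hψint.const_mul _
          have hB : (∫ w : Phase d, ψ w) * Ω.indicator (fun _ => (1:ℝ)) z =
              ∫ w : Phase d, Ω.indicator (fun _ => (1:ℝ)) z * ψ w := by
            rw [integral_const_mul]; ring
          rw [hB, ← integral_sub (hint z) hconst]
          refine le_trans (enorm_integral_le_lintegral_enorm _)
            (le_of_eq (lintegral_congr fun w => ?_))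
          have hfac : Ω.indicator (fun _ => (1:ℝ)) (z - w) * ψ w -
              Ω.indicator (fun _ => (1:ℝ)) z * ψ w =
              (Ω.indicator (fun _ => (1:ℝ)) (z - w) -
                Ω.indicator (fun _ => (1:ℝ)) z) * ψ w := by ring
          rw [hfac]; exact enorm_mul _ _
      _ = ∫⁻ w : Phase d, ∫⁻ z : Phase d,
            (‖Ω.indicator (fun _ => (1:ℝ)) (z - w) - Ω.indicator (fun _ => (1:ℝ)) z‖₊ :
              ℝ≥0∞) * (‖ψ w‖₊ : ℝ≥0∞) := by
          refine lintegral_lintegral_swap ?_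
          have hm1 : Measurable fun p : Phase d × Phase d =>
              Ω.indicator (fun _ => (1:ℝ)) (p.1 - p.2) :=
            (measurable_const.indicator hΩm).comp (measurable_fst.sub measurable_snd)
          have hm2 : Measurable fun p : Phase d × Phase d =>
              Ω.indicator (fun _ => (1:ℝ)) p.1 :=
            (measurable_const.indicator hΩm).comp measurable_fst
          exact (((hm1.sub hm2).nnnorm.coe_nnreal_ennreal).mul
            (((hψmeas.nnnorm.coe_nnreal_ennreal).comp measurable_snd))).aemeasurable
      _ = ∫⁻ w : Phase d, (∫⁻ z : Phase d,
            (‖Ω.indicator (fun _ => (1:ℝ)) (z - w) - Ω.indicator (fun _ => (1:ℝ)) z‖₊ :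
              ℝ≥0∞)) * (‖ψ w‖₊ : ℝ≥0∞) := by
          refine lintegral_congr fun w => ?_
          refine lintegral_mul_const _ ?_
          have hm1 : Measurable fun z : Phase d => Ω.indicator (fun _ => (1:ℝ)) (z - w) :=
            (measurable_const.indicator hΩm).comp (measurable_id.sub measurable_const)
          have hm2 : Measurable fun z : Phase d => Ω.indicator (fun _ => (1:ℝ)) z :=
            measurable_const.indicator hΩm
          exact (hm1.sub hm2).nnnorm.coe_nnreal_ennreal
      _ ≤ ∫⁻ w : Phase d, (H * (‖w‖₊ : ℝ≥0∞)) * (‖ψ w‖₊ : ℝ≥0∞) := by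
          refine lintegral_mono fun w => ?_
          refine mul_le_mul_left ?_ _
          by_cases hw : w = 0
          · subst hw
            simp
          · calc (∫⁻ z : Phase d,
                (‖Ω.indicator (fun _ => (1:ℝ)) (z - w) -
                  Ω.indicator (fun _ => (1:ℝ)) z‖₊ : ℝ≥0∞))
                ≤ ∫⁻ z : Phase d, (T w).indicator (fun _ => (1 : ℝ≥0∞)) z :=
                  lintegral_mono fun z => aux_ptwise w z
            _ = volume (T w) := lintegral_indicator_one (hTmeas w)
            _ ≤ H * (‖w‖₊ : ℝ≥0∞) := aux_tube hd (frontier Ω) w hw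
      _ = H * ∫⁻ w : Phase d, (‖w‖₊ : ℝ≥0∞) * (‖ψ w‖₊ : ℝ≥0∞) := by
          rw [← lintegral_const_mul H (by
            exact (measurable_nnnorm.coe_nnreal_ennreal).mul
              (hψmeas.nnnorm.coe_nnreal_ennreal))]
          refine lintegral_congr fun w => ?_
          rw [mul_assoc]
end

section
/- Let γ(s,x) = ∫₀ˣ t^{s−1} e^{−t} dt denote the lower incomplete gamma function, and for R > 0 and k ∈ ℕ₀ set λ_k = γ(k+1, πR²)/k!. There exist absolute constants c, C > 0 such that whenever δ ∈ (0,1) and R > 0 satisfy C ≤ √(log(1/δ)) ≤ R, one has #{k ∈ ℕ₀ : λ_k > δ} ≥ πR² + c · R · √(log(1/δ)). -/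
open Finset in
lemma lg_eq (k : ℕ) (x : ℝ) (hx : 0 ≤ x) :
    lowerGamma ((k : ℝ) + 1) x
      = (k.factorial : ℝ) * (1 - Real.exp (-x) * ∑ j ∈ range (k + 1), x ^ j / j.factorial) := by
  have h1 : lowerGamma ((k : ℝ) + 1) x = ∫ t in (0:ℝ)..x, t ^ k * Real.exp (-t) := by
    rw [intervalIntegral.integral_of_le hx, lowerGamma]
    congr 1
    ext t
    rw [show (k : ℝ) + 1 - 1 = (k : ℝ) by ring, Real.rpow_natCast]
  set c : ℕ → ℝ := fun j => (k.factorial : ℝ) / j.factorial with hc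
  set F : ℝ → ℝ := fun t => -(Real.exp (-t) * ∑ j ∈ range (k + 1), c j * t ^ j) with hF
  have hderiv : ∀ t : ℝ, HasDerivAt F (t ^ k * Real.exp (-t)) t := by
    intro t
    have hS : HasDerivAt (fun t : ℝ => ∑ j ∈ range (k + 1), c j * t ^ j)
        (∑ j ∈ range (k + 1), c j * (j * t ^ (j - 1))) t := by
      exact HasDerivAt.fun_sum fun j _ => (hasDerivAt_pow j t).const_mul (c j)
    have hE : HasDerivAt (fun t : ℝ => Real.exp (-t)) (-Real.exp (-t)) t := by
      simpa using (hasDerivAt_neg t).exp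
    have := ((hE.mul hS).neg)
    refine this.congr_deriv ?_
    have hsum : (∑ j ∈ range (k + 1), c j * ((j : ℝ) * t ^ (j - 1)))
        = ∑ j ∈ range k, c j * t ^ j := by
      rw [Finset.sum_range_succ']
      simp only [Nat.cast_zero, pow_zero]
      rw [show c 0 * ((0:ℝ) * t ^ (0 - 1)) = 0 by ring, add_zero]
      refine Finset.sum_congr rfl fun j _ => ?_
      have : c (j + 1) * ((j : ℝ) + 1) = c j := by
        rw [hc]
        simp only []
        rw [Nat.factorial_succ]
        push_cast
        field_simp
      calc c (j + 1) * (((j:ℕ) + 1 : ℕ) * t ^ ((j + 1) - 1))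
          = (c (j + 1) * ((j : ℝ) + 1)) * t ^ j := by push_cast; ring
        _ = c j * t ^ j := by rw [this]
    rw [hsum]
    have hsplit : (∑ j ∈ range (k + 1), c j * t ^ j)
        = (∑ j ∈ range k, c j * t ^ j) + t ^ k := by
      rw [Finset.sum_range_succ]
      have : c k = 1 := div_self (by exact_mod_cast k.factorial_ne_zero)
      rw [this, one_mul]
    rw [hsplit]
    ring
  have hcont : Continuous fun t : ℝ => t ^ k * Real.exp (-t) := by continuity
  have := intervalIntegral.integral_eq_sub_of_hasDerivAt
    (fun t _ => hderiv t) (hcont.intervalIntegrable 0 x)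
  rw [h1, this]
  have hF0 : F 0 = -(k.factorial : ℝ) := by
    rw [hF]
    simp only [neg_zero, Real.exp_zero, one_mul]
    rw [Finset.sum_eq_single 0]
    · simp [hc]
    · intro j _ hj; simp [zero_pow hj]
    · simp
  have hs : (∑ j ∈ range (k + 1), c j * x ^ j)
      = (k.factorial : ℝ) * ∑ j ∈ range (k + 1), x ^ j / j.factorial := by
    rw [Finset.mul_sum]
    refine Finset.sum_congr rfl fun j _ => ?_
    rw [hc]; ring
  rw [hF0]; simp only [hF]; rw [hs]; ring

lemma factorial_upper (m : ℕ) (hm : 1 ≤ m) :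
    (m.factorial : ℝ) ≤ Real.exp 1 * Real.sqrt m * ((m : ℝ) / Real.exp 1) ^ m := by
  have hmpos : (0 : ℝ) < m := by exact_mod_cast hm
  have hD : (0 : ℝ) < Real.sqrt (2 * m) * ((m : ℝ) / Real.exp 1) ^ m := by positivity
  have hpos : 0 < Stirling.stirlingSeq m := by
    rw [Stirling.stirlingSeq]
    positivity
  have hpos1 : 0 < Stirling.stirlingSeq 1 := by
    rw [Stirling.stirlingSeq_one]; positivity
  have hle : Stirling.stirlingSeq m ≤ Stirling.stirlingSeq 1 := by
    obtain ⟨n, rfl⟩ := Nat.exists_eq_add_of_le hm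
    have := Stirling.log_stirlingSeq'_antitone (Nat.zero_le n)
    simp only [Function.comp_apply, Nat.succ_eq_add_one, zero_add, Nat.add_comm n 1] at this
    rwa [Real.log_le_log_iff hpos hpos1] at this
  have hfac : (m.factorial : ℝ)
      = Stirling.stirlingSeq m * (Real.sqrt (2 * m) * ((m : ℝ) / Real.exp 1) ^ m) := by
    rw [Stirling.stirlingSeq, div_mul_cancel₀]
    exact ne_of_gt hD
  rw [hfac]
  have h2 : Real.sqrt (2 * m) = Real.sqrt 2 * Real.sqrt m := Real.sqrt_mul (by norm_num) _
  calc Stirling.stirlingSeq m * (Real.sqrt (2 * m) * ((m : ℝ) / Real.exp 1) ^ m)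
      ≤ Stirling.stirlingSeq 1 * (Real.sqrt (2 * m) * ((m : ℝ) / Real.exp 1) ^ m) := by
        apply mul_le_mul_of_nonneg_right hle (le_of_lt hD)
    _ = Real.exp 1 * Real.sqrt m * ((m : ℝ) / Real.exp 1) ^ m := by
        rw [Stirling.stirlingSeq_one, h2]
        field_simp

lemma terms_anti (x : ℝ) (hx : 0 ≤ x) {j : ℕ} (hxj : x ≤ (j : ℝ)) :
    ∀ m, j ≤ m → x ^ m / m.factorial ≤ x ^ j / j.factorial := by
  intro m hm
  induction m, hm using Nat.le_induction with
  | base => exact le_refl _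
  | succ m hjm ih =>
    refine le_trans ?_ ih
    rw [pow_succ, Nat.factorial_succ]
    push_cast
    rw [div_le_div_iff₀ (by positivity) (by positivity)]
    have hxm : x ≤ (m : ℝ) + 1 := hxj.trans (by exact_mod_cast Nat.le_succ_of_le hjm)
    have h1 : (0:ℝ) ≤ x ^ m := by positivity
    have h2 : (0:ℝ) ≤ (m.factorial : ℝ) := by positivity
    nlinarith [mul_le_mul_of_nonneg_left hxm (mul_nonneg h1 h2)]

lemma lg_le (k : ℕ) (x : ℝ) (hx : 0 ≤ x) :
    lowerGamma ((k : ℝ) + 1) x ≤ x * x ^ k := by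
  have h1 : lowerGamma ((k : ℝ) + 1) x = ∫ t in Set.Ioc (0:ℝ) x, t ^ k * Real.exp (-t) := by
    rw [lowerGamma]
    congr 1; ext t
    rw [show (k : ℝ) + 1 - 1 = (k : ℝ) by ring, Real.rpow_natCast]
  rw [h1]
  have hcont : Continuous fun t : ℝ => t ^ k * Real.exp (-t) := by continuity
  have hint : MeasureTheory.IntegrableOn (fun t : ℝ => t ^ k * Real.exp (-t))
      (Set.Ioc (0:ℝ) x) := hcont.integrableOn_Ioc
  have hintc : MeasureTheory.IntegrableOn (fun _ : ℝ => x ^ k) (Set.Ioc (0:ℝ) x) :=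
    MeasureTheory.integrableOn_const measure_Ioc_lt_top.ne enorm_ne_top
  calc (∫ t in Set.Ioc (0:ℝ) x, t ^ k * Real.exp (-t))
      ≤ ∫ _ in Set.Ioc (0:ℝ) x, x ^ k := by
        refine MeasureTheory.setIntegral_mono_on hint hintc measurableSet_Ioc ?_
        intro t ht
        have ht1 : 0 < t := ht.1
        have ht2 : t ≤ x := ht.2
        have : t ^ k ≤ x ^ k := pow_le_pow_left₀ (le_of_lt ht1) ht2 k
        have he : Real.exp (-t) ≤ 1 := Real.exp_le_one_iff.2 (by linarith)
        nlinarith [pow_pos ht1 k]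
    _ = x * x ^ k := by
        rw [MeasureTheory.setIntegral_const]
        simp [Real.volume_Ioc, ENNReal.toReal_ofReal hx, smul_eq_mul, hx]

set_option maxHeartbeats 1600000 in
/-- **Section 4.3: lower bound on the eigenvalue counting function of the
concentration operator for the Gaussian window and a disk of radius `R`, in the
regime `C ≤ √(log(1/δ)) ≤ R`.** -/
theorem gaussian_disk_counting_lower_bound :
    ∃ c C : ℝ, 0 < c ∧ 0 < C ∧
      ∀ δ R : ℝ, 0 < δ → δ < 1 → 0 < R →
        C ≤ Real.sqrt (Real.log (1 / δ)) → Real.sqrt (Real.log (1 / δ)) ≤ R →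
        Real.pi * R ^ 2 + c * R * Real.sqrt (Real.log (1 / δ)) ≤
          (Set.ncard {k : ℕ |
            δ < lowerGamma ((k : ℝ) + 1) (Real.pi * R ^ 2) / (k.factorial : ℝ)} : ℝ) := by
  refine ⟨1/2, 15, by norm_num, by norm_num, ?_⟩
  intro δ R hδ0 hδ1 hR0 hC hLR
  set L : ℝ := Real.sqrt (Real.log (1 / δ)) with hLdef
  set x : ℝ := Real.pi * R ^ 2 with hxdef
  have hπ1 : (3.14 : ℝ) < Real.pi := by
    have := Real.pi_gt_d6; linarith
  have hπ2 : Real.pi < 3.15 := by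
    have := Real.pi_lt_d2; linarith
  have hL15 : (15 : ℝ) ≤ L := hC
  have hR15 : (15 : ℝ) ≤ R := hL15.trans hLR
  have hLpos : (0 : ℝ) < L := by linarith
  have hx0 : (0 : ℝ) < x := by rw [hxdef]; positivity
  have hlognn : 0 ≤ Real.log (1 / δ) := Real.log_nonneg ((one_le_div hδ0).2 (by linarith))
  have hL2 : L ^ 2 = Real.log (1 / δ) := Real.sq_sqrt hlognn
  have hδeq : δ = Real.exp (-L ^ 2) := by
    rw [hL2, one_div, Real.log_inv, neg_neg, Real.exp_log hδ0]
  -- the index thresholds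
  set n : ℕ := ⌈x + R * L / 2⌉₊ with hndef
  set r : ℕ := ⌈R⌉₊ with hrdef
  set m : ℕ := n + r with hmdef
  have hn_ge : x + R * L / 2 ≤ (n : ℝ) := Nat.le_ceil _
  have hn_lt : (n : ℝ) < x + R * L / 2 + 1 :=
    (Nat.ceil_lt_add_one (by positivity))
  have hr_ge : R ≤ (r : ℝ) := Nat.le_ceil _
  have hr_lt : (r : ℝ) < R + 1 := Nat.ceil_lt_add_one (le_of_lt hR0)
  have hm_cast : (m : ℝ) = (n : ℝ) + (r : ℝ) := by rw [hmdef]; push_cast; ring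
  have hRL : R * 15 ≤ R * L := mul_le_mul_of_nonneg_left hL15 hR0.le
  have hRLpos : 0 < R * L := mul_pos hR0 hLpos
  set s : ℝ := (m : ℝ) - x with hsdef
  have hs_pos : 0 < s := by
    have h1 : x < (n : ℝ) := by linarith
    have hnm : (n : ℝ) ≤ (m : ℝ) := by rw [hm_cast]; linarith
    rw [hsdef]; linarith
  have hs_ub : s ≤ 2/3 * (R * L) := by
    rw [hsdef, hm_cast]
    linarith
  have hxn : x ≤ (n : ℝ) := by linarith
  have hn1 : 1 ≤ n := by
    have h1 : (0:ℝ) < (n:ℝ) := lt_of_lt_of_le (by positivity) hn_ge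
    exact_mod_cast Nat.cast_pos.mp h1
  have hm1 : 1 ≤ m := le_trans hn1 (Nat.le_add_right n r)
  have hmfacpos : (0 : ℝ) < (m.factorial : ℝ) := by positivity
  have hmRpos : (0 : ℝ) < (m : ℝ) := by exact_mod_cast hm1
  have hR2pos : (0:ℝ) < R ^ 2 := by positivity
  have hxle : x ≤ 3.15 * R ^ 2 :=
    le_of_lt (by rw [hxdef]; exact mul_lt_mul_of_pos_right hπ2 hR2pos)
  have hxge : 3.14 * R ^ 2 ≤ x :=
    le_of_lt (by rw [hxdef]; exact mul_lt_mul_of_pos_right hπ1 hR2pos)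
  have hRLR2 : R * L ≤ R ^ 2 := by
    calc R * L ≤ R * R := mul_le_mul_of_nonneg_left hLR hR0.le
      _ = R ^ 2 := by ring
  have hL2ge : (225:ℝ) ≤ L ^ 2 := by
    have h15 : (0:ℝ) ≤ 15 := by norm_num
    calc (225:ℝ) = 15 * 15 := by norm_num
      _ ≤ L * L := mul_le_mul hL15 hL15 h15 (le_trans h15 hL15)
      _ = L ^ 2 := by ring
  -- √m ≤ 2 R
  have hsqm : Real.sqrt m ≤ 2 * R := by
    have hmle : (m : ℝ) ≤ (2 * R) ^ 2 := by
      have hmeq : (m : ℝ) = x + s := by rw [hsdef]; ring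
      have h4 : (2 * R) ^ 2 = 4 * R ^ 2 := by ring
      linarith
    calc Real.sqrt m ≤ Real.sqrt ((2 * R) ^ 2) := Real.sqrt_le_sqrt hmle
      _ = 2 * R := Real.sqrt_sq (by linarith)
  -- key exponent bound
  have hexp_le : 1 - L ^ 2 + s ^ 2 / x ≤ -1 := by
    have hprod : 0 ≤ (x - 3.14 * R ^ 2) * (L ^ 2 - 2) :=
      mul_nonneg (by linarith) (by linarith)
    have hsa : s ^ 2 ≤ (2/3 * (R * L)) ^ 2 := by
      rw [pow_two, pow_two]
      exact mul_self_le_mul_self hs_pos.le hs_ub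
    have hb : 225 * R ^ 2 ≤ R ^ 2 * L ^ 2 := by
      have := mul_le_mul_of_nonneg_left hL2ge hR2pos.le
      linarith
    have h1 : s ^ 2 ≤ x * (L ^ 2 - 2) := by nlinarith [hprod, hsa, hb, hR2pos.le]
    have h2 : s ^ 2 / x ≤ L ^ 2 - 2 := (div_le_iff₀ hx0).2 (by linarith [h1])
    linarith
  -- key inequality : δ e^x < R * (x^m / m!)
  have key : δ * Real.exp x < R * (x ^ m / (m.factorial : ℝ)) := by
    rw [show R * (x ^ m / (m.factorial : ℝ)) = R * x ^ m / (m.factorial : ℝ) by ring,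
        lt_div_iff₀ hmfacpos]
    have e1 : (m.factorial : ℝ) ≤ Real.exp 1 * Real.sqrt m * ((m : ℝ) / Real.exp 1) ^ m :=
      factorial_upper m hm1
    have hdiv : ((m : ℝ) / Real.exp 1) ^ m = (m : ℝ) ^ m * Real.exp (-(m : ℝ)) := by
      rw [div_pow, ← Real.exp_nat_mul, mul_one, Real.exp_neg]
      ring
    have hm_eq : (m : ℝ) = x + s := by rw [hsdef]; ring
    have hmx : (m : ℝ) ≤ x * Real.exp (s / x) := by
      have h0 : s / x + 1 ≤ Real.exp (s / x) := Real.add_one_le_exp _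
      have h1 : (m : ℝ) = x * (s / x + 1) := by
        rw [mul_add, mul_one, mul_div_cancel₀ _ hx0.ne', hm_eq]; ring
      rw [h1]
      exact mul_le_mul_of_nonneg_left h0 hx0.le
    have hpow : (m : ℝ) ^ m ≤ x ^ m * Real.exp ((m : ℝ) * (s / x)) := by
      calc (m : ℝ) ^ m ≤ (x * Real.exp (s / x)) ^ m := pow_le_pow_left₀ hmRpos.le hmx m
        _ = x ^ m * (Real.exp (s / x)) ^ m := mul_pow _ _ _
        _ = x ^ m * Real.exp ((m : ℝ) * (s / x)) := by rw [← Real.exp_nat_mul]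
    have hargs : -L ^ 2 + x + 1 + ((m : ℝ) * (s / x)) + -(m : ℝ) = 1 - L ^ 2 + s ^ 2 / x := by
      rw [hm_eq]
      field_simp
      ring
    have hexps : Real.exp (-L ^ 2) * Real.exp x * Real.exp 1 * Real.exp ((m : ℝ) * (s / x))
        * Real.exp (-(m : ℝ)) = Real.exp (1 - L ^ 2 + s ^ 2 / x) := by
      rw [← Real.exp_add, ← Real.exp_add, ← Real.exp_add, ← Real.exp_add, hargs]
    have hsm : (0 : ℝ) ≤ Real.sqrt m := Real.sqrt_nonneg _
    calc δ * Real.exp x * (m.factorial : ℝ)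
        ≤ δ * Real.exp x * (Real.exp 1 * Real.sqrt m * ((m : ℝ) ^ m * Real.exp (-(m : ℝ)))) := by
          rw [← hdiv]
          exact mul_le_mul_of_nonneg_left e1 (by positivity)
      _ ≤ δ * Real.exp x * (Real.exp 1 * Real.sqrt m
            * ((x ^ m * Real.exp ((m : ℝ) * (s / x))) * Real.exp (-(m : ℝ)))) := by
          gcongr
      _ = Real.sqrt m * x ^ m * Real.exp (1 - L ^ 2 + s ^ 2 / x) := by
          rw [hδeq, ← hexps]; ring
      _ ≤ (2 * R) * x ^ m * Real.exp (-1) := by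
          have h1 : Real.exp (1 - L ^ 2 + s ^ 2 / x) ≤ Real.exp (-1) := Real.exp_le_exp.2 hexp_le
          have h2 : (0:ℝ) ≤ x ^ m := by positivity
          gcongr
      _ < R * x ^ m := by
          have h3 : (2 : ℝ) < Real.exp 1 := by
            have := Real.exp_one_gt_d9; linarith
          have h6 : Real.exp (-1) < 1 / 2 := by
            rw [Real.exp_neg]
            have : ((1:ℝ)/2)⁻¹ < Real.exp 1 := by norm_num; linarith
            calc (Real.exp 1)⁻¹ < ((1:ℝ)/2)⁻¹⁻¹ := by
                  exact inv_strictAnti₀ (by norm_num) this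
              _ = 1/2 := by norm_num
          have h4 : (0 : ℝ) < x ^ m := by positivity
          calc 2 * R * x ^ m * Real.exp (-1) = (2 * Real.exp (-1)) * (R * x ^ m) := by ring
            _ < 1 * (R * x ^ m) := by
                exact mul_lt_mul_of_pos_right (by linarith) (mul_pos hR0 h4)
            _ = R * x ^ m := one_mul _
  -- sum over Ico n (m+1) dominates δ e^x
  have hIco : δ * Real.exp x < ∑ j ∈ Finset.Ico n (m + 1), x ^ j / (j.factorial : ℝ) := by
    have hcard : (Finset.Ico n (m + 1)).card = r + 1 := by
      rw [Nat.card_Ico]; omega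
    have hterm : ∀ j ∈ Finset.Ico n (m + 1),
        x ^ m / (m.factorial : ℝ) ≤ x ^ j / (j.factorial : ℝ) := by
      intro j hj
      rw [Finset.mem_Ico] at hj
      have hxj : x ≤ (j : ℝ) := hxn.trans (by exact_mod_cast hj.1)
      exact terms_anti x hx0.le hxj m (by omega)
    have hlb := Finset.card_nsmul_le_sum (Finset.Ico n (m + 1)) _ _ hterm
    rw [hcard, nsmul_eq_mul] at hlb
    push_cast at hlb
    have hxm_nonneg : (0:ℝ) ≤ x ^ m / (m.factorial : ℝ) := by positivity
    have hRr : R * (x ^ m / (m.factorial : ℝ)) ≤ ((r:ℝ) + 1) * (x ^ m / (m.factorial : ℝ)) :=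
      mul_le_mul_of_nonneg_right (by linarith) hxm_nonneg
    linarith
  -- membership : every k < n lies in the set
  have hmem : ∀ k : ℕ, k < n →
      δ < lowerGamma ((k : ℝ) + 1) x / (k.factorial : ℝ) := by
    intro k hk
    have hfac : ((k.factorial : ℝ)) ≠ 0 := by positivity
    rw [lg_eq k x hx0.le, mul_div_cancel_left₀ _ hfac]
    have hSk : (∑ j ∈ Finset.range (k + 1), x ^ j / (j.factorial : ℝ))
        ≤ ∑ j ∈ Finset.range n, x ^ j / (j.factorial : ℝ) := by
      apply Finset.sum_le_sum_of_subset_of_nonneg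
      · exact Finset.range_subset_range.2 (by omega)
      · intro j _ _; positivity
    have hsplit : (∑ j ∈ Finset.range n, x ^ j / (j.factorial : ℝ))
        + ∑ j ∈ Finset.Ico n (m + 1), x ^ j / (j.factorial : ℝ)
        = ∑ j ∈ Finset.range (m + 1), x ^ j / (j.factorial : ℝ) :=
      Finset.sum_range_add_sum_Ico _ (by omega)
    have hexp2 : (∑ j ∈ Finset.range (m + 1), x ^ j / (j.factorial : ℝ)) ≤ Real.exp x :=
      Real.sum_le_exp_of_nonneg hx0.le _
    have hlt : (∑ j ∈ Finset.range (k + 1), x ^ j / (j.factorial : ℝ))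
        < (1 - δ) * Real.exp x := by nlinarith [hSk, hsplit, hexp2, hIco]
    have hee : Real.exp (-x) * Real.exp x = 1 := by
      rw [← Real.exp_add]; norm_num
    have hmul := mul_lt_mul_of_pos_left hlt (Real.exp_pos (-x))
    have h2 : Real.exp (-x) * ((1 - δ) * Real.exp x) = 1 - δ := by
      calc Real.exp (-x) * ((1 - δ) * Real.exp x)
          = (1 - δ) * (Real.exp (-x) * Real.exp x) := by ring
        _ = 1 - δ := by rw [hee]; ring
    rw [h2] at hmul
    linarith
  -- the set is finite
  set S : Set ℕ := {k : ℕ | δ < lowerGamma ((k : ℝ) + 1) x / (k.factorial : ℝ)} with hSdef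
  have htend : Filter.Tendsto (fun k : ℕ => x * (x ^ k / (k.factorial : ℝ)))
      Filter.atTop (nhds 0) := by
    have h := (Real.summable_pow_div_factorial x).tendsto_atTop_zero.const_mul x
    simpa using h
  have hev : ∀ᶠ k : ℕ in Filter.atTop, x * (x ^ k / (k.factorial : ℝ)) < δ :=
    htend.eventually (gt_mem_nhds hδ0)
  obtain ⟨K, hK⟩ := Filter.eventually_atTop.1 hev
  have hSsub : S ⊆ Set.Iio K := by
    intro k hk
    simp only [Set.mem_Iio]
    by_contra h
    push_neg at h
    have h1 := hK k h
    have h2 : lowerGamma ((k : ℝ) + 1) x / (k.factorial : ℝ)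
        ≤ x * (x ^ k / (k.factorial : ℝ)) := by
      rw [show x * (x ^ k / (k.factorial : ℝ)) = x * x ^ k / (k.factorial : ℝ) by ring]
      gcongr
      · exact lg_le k x hx0.le
    have hk' : δ < lowerGamma ((k : ℝ) + 1) x / (k.factorial : ℝ) := hk
    linarith
  have hSfin : S.Finite := (Set.finite_Iio K).subset hSsub
  have hsub2 : Set.Iio n ⊆ S := fun k hk => hmem k hk
  have hncard : n ≤ S.ncard := by
    calc n = (Set.Iio n).ncard := by
          rw [← Finset.coe_Iio, Set.ncard_coe_finset, Nat.card_Iio]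
      _ ≤ S.ncard := Set.ncard_le_ncard hsub2 hSfin
  have hncard' : (n : ℝ) ≤ (S.ncard : ℝ) := by exact_mod_cast hncard
  calc x + 1/2 * R * L ≤ (n : ℝ) := by linarith
    _ ≤ (S.ncard : ℝ) := hncard'
end
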